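/- Let P ∈ ℝ^{m×m}, Q ∈ ℝ^{n×n}, α ∈ ℝ, and let S ∈ ℝ^{m×n} be a matrix of rank at most r. Define Y^(0) = S and Y^(j) = α P Y^(j-1) Qᵀ + (1−α) S for j ≥ 1. Then for every t ≥ 0, Y^(t) = (1−α) Σ_{k=0}^{t−1} α^k P^k S (Qᵀ)^k + α^t P^t S (Qᵀ)^t, and Y^(t) has rank at most r·(t+1). -/
import Mathlib


open Matrix

private lemma rank_smul_le {m n : ℕ} (c : ℝ) (A : Matrix (Fin m) (Fin n) ℝ) :
    (c • A).rank ≤ A.rank := by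
  have h : c • A = A * (c • (1 : Matrix (Fin n) (Fin n) ℝ)) := by
    rw [Matrix.mul_smul, Matrix.mul_one]
  rw [h]
  exact Matrix.rank_mul_le_left A _

private lemma rank_add_le' {m n : ℕ} (A B : Matrix (Fin m) (Fin n) ℝ) :
    (A + B).rank ≤ A.rank + B.rank := by
  classical
  have hrange : LinearMap.range (A + B).mulVecLin ≤
      LinearMap.range A.mulVecLin ⊔ LinearMap.range B.mulVecLin := by
    rintro x ⟨v, rfl⟩
    rw [Matrix.mulVecLin_add]
    exact Submodule.add_mem_sup ⟨v, rfl⟩ ⟨v, rfl⟩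
  calc (A + B).rank ≤ Module.finrank ℝ
        (LinearMap.range A.mulVecLin ⊔ LinearMap.range B.mulVecLin : Submodule ℝ (Fin m → ℝ)) :=
        Submodule.finrank_mono hrange
    _ ≤ A.rank + B.rank := Submodule.finrank_add_le_finrank_add_finrank _ _

theorem msd_closed_form_and_rank_bound
    {m n : ℕ}
    (P : Matrix (Fin m) (Fin m) ℝ) (Q : Matrix (Fin n) (Fin n) ℝ)
    (α : ℝ) (r : ℕ)
    (S : Matrix (Fin m) (Fin n) ℝ) (hS : S.rank ≤ r)
    (Y : ℕ → Matrix (Fin m) (Fin n) ℝ)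
    (hY0 : Y 0 = S)
    (hYrec : ∀ j : ℕ, Y (j + 1) = α • (P * Y j * Qᵀ) + (1 - α) • S) :
    ∀ t : ℕ,
      Y t =
        (1 - α) • ∑ k ∈ Finset.range t, α ^ k • (P ^ k * S * (Qᵀ) ^ k) +
          α ^ t • (P ^ t * S * (Qᵀ) ^ t) ∧
      (Y t).rank ≤ r * (t + 1) := by
  have hterm : ∀ (c : ℝ) (k : ℕ), (c • (P ^ k * S * (Qᵀ) ^ k)).rank ≤ r :=
    fun c k => le_trans (rank_smul_le c _) <|
      le_trans (Matrix.rank_mul_le_left _ _) <|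
      le_trans (Matrix.rank_mul_le_right _ _) hS
  intro t
  induction t with
  | zero =>
    constructor
    · simp [hY0]
    · simpa [hY0] using hS
  | succ t ih =>
    obtain ⟨hcf, hrk⟩ := ih
    constructor
    · have hP : ∀ k : ℕ, P * (P ^ k * S * (Qᵀ) ^ k) * Qᵀ = P ^ (k + 1) * S * (Qᵀ) ^ (k + 1) := by
        intro k
        rw [pow_succ', pow_succ]
        simp [Matrix.mul_assoc]
      have key : P * (∑ k ∈ Finset.range t, α ^ k • (P ^ k * S * (Qᵀ) ^ k)) * Qᵀ
          = ∑ k ∈ Finset.range t, α ^ k • (P ^ (k + 1) * S * (Qᵀ) ^ (k + 1)) := by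
        rw [Matrix.mul_sum, Matrix.sum_mul]
        exact Finset.sum_congr rfl fun k _ => by rw [Matrix.mul_smul, Matrix.smul_mul, hP]
      have hsum : ∑ k ∈ Finset.range (t + 1), α ^ k • (P ^ k * S * (Qᵀ) ^ k)
          = α • (∑ k ∈ Finset.range t, α ^ k • (P ^ (k + 1) * S * (Qᵀ) ^ (k + 1))) + S := by
        rw [Finset.sum_range_succ', Finset.smul_sum]
        simp [smul_smul, pow_succ']
      rw [hYrec t, hcf, hsum, Matrix.mul_add, Matrix.add_mul, Matrix.mul_smul, Matrix.mul_smul,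
        Matrix.smul_mul, Matrix.smul_mul, key]
      have hf : α ^ (t + 1) = α * α ^ t := pow_succ' α t
      rw [hf, hP]
      module
    · rw [hYrec t]
      calc (α • (P * Y t * Qᵀ) + (1 - α) • S).rank
          ≤ (α • (P * Y t * Qᵀ)).rank + ((1 - α) • S).rank := rank_add_le' _ _
        _ ≤ (Y t).rank + r := by
            gcongr
            · exact le_trans (rank_smul_le _ _) <|
                le_trans (Matrix.rank_mul_le_left _ _) (Matrix.rank_mul_le_right _ _)
            · exact le_trans (rank_smul_le _ _) hS
        _ ≤ r * (t + 1) + r := by gcongr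
        _ = r * (t + 1 + 1) := by ring
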